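/- The Rice polynomials H_n(ξ,p;v) = ∑_{j=0}^n (-n)_j (n+1)_j (ξ)_j / (j!^2 (p)_j) v^j satisfy the generating function identity ∑_{n=0}^∞ t^n H_n(ξ,p;v) = (1-t)^{-1} F(ξ, 1/2; p; -4vt(1-t)^{-2}) for all complex t, v with |t| and |v| small enough that both sides converge. -/

import Mathlib

open Complex MeasureTheory Real

noncomputable def poch (x : ℂ) (n : ℕ) : ℂ := (ascPochhammer ℂ n).eval x

noncomputable def hyp (a b c z : ℂ) : ℂ :=
  ∑' k : ℕ, poch a k * poch b k / ((k.factorial : ℂ) * poch c k) * z ^ k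

noncomputable def riceH (n : ℕ) (ξ p v : ℂ) : ℂ :=
  ∑ j ∈ Finset.range (n + 1),
    poch (-(n : ℂ)) j * poch ((n : ℂ) + 1) j * poch ξ j /
      (((j.factorial : ℂ)) ^ 2 * poch p j) * v ^ j

open Finset Topology
open scoped Nat

/-!
Since `(-n)_j (n+1)_j = (-1)^j (2j)! C(n+j, 2j)` and `(2j)! = 4^j j! (1/2)_j`, the `j`-th term of
`H_n` is `C(n+j, 2j) a_j (-4v)^j`, where `a_j` is the `j`-th coefficient of `F(ξ, 1/2; p; ·)`.
Summing over `n` first, `∑_n C(n+j, 2j) t^n = t^j / (1-t)^(2j+1)`, so `∑ t^n H_n` becomes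
`(1-t)⁻¹ ∑_j a_j (-4vt/(1-t)^2)^j`. The interchange is justified by absolute convergence of the
double series, whose absolute row sums are the terms of the hypergeometric series of `|a_j|` at
`4|v||t|/(1-|t|)^2`; this is `< 1` for small `t`, and the radius of convergence is at least `1`.
-/

lemma poch_succ (x : ℂ) (n : ℕ) : poch x (n + 1) = poch x n * (x + n) :=
  ascPochhammer_succ_eval n x

lemma poch_half_mul_four_pow_mul_factorial (k : ℕ) :
    poch (1 / 2) k * (4 ^ k * k !) = (2 * k)! := by
  induction k with
  | zero => simp [poch]
  | succ k ih =>
    rw [poch_succ, show 2 * (k + 1) = 2 * k + 1 + 1 by ring, Nat.factorial_succ,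
      Nat.factorial_succ, Nat.factorial_succ]
    push_cast
    linear_combination (2 * (k : ℂ) + 1) * (2 * k + 2) * ih

lemma poch_neg_natCast_mul_poch_natCast_add_one (n j : ℕ) :
    poch (-n) j * poch (n + 1) j = (-1) ^ j * ((2 * j)! * (n + j).choose (2 * j) : ℕ) := by
  have hneg : poch (-n) j = (-1) ^ j * n.descFactorial j := by
    rw [poch, ascPochhammer_eval_neg_eq_descPochhammer, descPochhammer_eval_eq_descFactorial]
  have hpos : poch (n + 1) j = (n + j).descFactorial j := by
    rw [poch, ← Nat.cast_add_one, ascPochhammer_nat_eq_natCast_descFactorial,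
      Nat.add_right_comm, Nat.add_sub_cancel]
  rw [hneg, hpos, ← Nat.descFactorial_eq_factorial_mul_choose,
    ← Nat.descFactorial_mul_descFactorial (show j ≤ 2 * j by omega)]
  simp only [Nat.add_sub_cancel, two_mul, Nat.cast_mul]
  ring

lemma ordinaryHypergeometricCoefficient_eq_poch (a b c : ℂ) (k : ℕ) :
    ordinaryHypergeometricCoefficient a b c k = poch a k * poch b k / (k ! * poch c k) := by
  simp only [ordinaryHypergeometricCoefficient, poch]
  ring

lemma hyp_eq_tsum_ordinaryHypergeometricCoefficient (a b c z : ℂ) :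
    hyp a b c z = ∑' k, ordinaryHypergeometricCoefficient a b c k * z ^ k := by
  simp only [hyp, ordinaryHypergeometricCoefficient_eq_poch]

theorem one_le_ordinaryHypergeometricSeries_radius {𝕂 : Type*} (𝔸 : Type*) [RCLike 𝕂]
    [NormedDivisionRing 𝔸] [NormedAlgebra 𝕂 𝔸] (a b c : 𝕂) :
    1 ≤ (ordinaryHypergeometricSeries 𝔸 a b c).radius := by
  -- A nonpositive integer parameter makes the series terminate (for `c` through `0⁻¹ = 0`).
  by_cases habc : ∀ k : ℕ, (k : 𝕂) ≠ -a ∧ (k : 𝕂) ≠ -b ∧ (k : 𝕂) ≠ -c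
  · exact (ordinaryHypergeometricSeries_radius_eq_one 𝔸 a b c habc).ge
  simp only [not_forall, not_and_or, not_not] at habc
  obtain ⟨k, ha | hb | hc⟩ := habc
  · rw [show a = -k by rw [ha, neg_neg], ordinaryHypergeometric_radius_top_of_neg_nat₁]
    exact le_top
  · rw [show b = -k by rw [hb, neg_neg], ordinaryHypergeometric_radius_top_of_neg_nat₂]
    exact le_top
  · rw [show c = -k by rw [hc, neg_neg], ordinaryHypergeometric_radius_top_of_neg_nat₃]
    exact le_top

theorem summable_norm_ordinaryHypergeometricCoefficient_mul_pow {𝕂 : Type*} [RCLike 𝕂]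
    (a b c : 𝕂) {r : ℝ} (hr₀ : 0 ≤ r) (hr₁ : r < 1) :
    Summable fun n => ‖ordinaryHypergeometricCoefficient a b c n‖ * r ^ n := by
  lift r to NNReal using hr₀
  have hr : (r : ENNReal) < (ordinaryHypergeometricSeries 𝕂 a b c).radius :=
    (ENNReal.coe_lt_one_iff.2 (by exact_mod_cast hr₁)).trans_le
      (one_le_ordinaryHypergeometricSeries_radius 𝕂 a b c)
  simpa only [ordinaryHypergeometricSeries, FormalMultilinearSeries.ofScalars_norm]
    using (ordinaryHypergeometricSeries 𝕂 a b c).summable_norm_mul_pow hr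

lemma riceH_eq_sum_choose_mul (n : ℕ) (ξ p v : ℂ) :
    riceH n ξ p v = ∑ j ∈ range (n + 1),
      ((n + j).choose (2 * j) : ℂ) *
        (ordinaryHypergeometricCoefficient ξ (1 / 2) p j * (-4 * v) ^ j) := by
  refine sum_congr rfl fun j _ => ?_
  have hfac : (j ! : ℂ) ≠ 0 := by exact_mod_cast j.factorial_ne_zero
  rw [poch_neg_natCast_mul_poch_natCast_add_one, Nat.cast_mul,
    ← poch_half_mul_four_pow_mul_factorial, ordinaryHypergeometricCoefficient_eq_poch,
    mul_pow, neg_pow (4 : ℂ)]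
  field_simp

theorem HasSum.sum_antidiagonal {α : Type*} [AddCommMonoid α] [TopologicalSpace α]
    [ContinuousAdd α] [RegularSpace α] {f : ℕ × ℕ → α} {a : α} (hf : HasSum f a) :
    HasSum (fun n => ∑ q ∈ antidiagonal n, f q) a :=
  (HasAntidiagonal.sigmaAntidiagonalEquivProd.hasSum_iff.2 hf).sigma fun n => by
    rw [← sum_coe_sort]
    exact hasSum_fintype _

section RCLike

variable {𝕜 : Type*} [RCLike 𝕜]

lemma hasSum_mul_pow_mul_choose_mul_geometric (c t : 𝕜) (j : ℕ) (ht : ‖t‖ < 1) :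
    HasSum (fun m => c * t ^ j * ((m + 2 * j).choose (2 * j) * t ^ m))
      ((1 - t)⁻¹ * (c * (t / (1 - t) ^ 2) ^ j)) := by
  have h1t : 1 - t ≠ 0 := sub_ne_zero.2 fun h => by simp [← h] at ht
  have h := (hasSum_choose_mul_geometric_of_norm_lt_one (2 * j) ht).mul_left (c * t ^ j)
  rwa [show c * t ^ j * (1 / (1 - t) ^ (2 * j + 1)) = (1 - t)⁻¹ * (c * (t / (1 - t) ^ 2) ^ j) by
    rw [div_pow, ← pow_mul, pow_succ]
    field_simp] at h

theorem hasSum_pow_mul_sum_choose_mul {b : ℕ → 𝕜} {t : 𝕜} (ht : ‖t‖ < 1)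
    (hb : Summable fun j => ‖b j‖ * (‖t‖ / (1 - ‖t‖) ^ 2) ^ j) :
    HasSum (fun n => t ^ n * ∑ j ∈ range (n + 1), ((n + j).choose (2 * j) : 𝕜) * b j)
      ((1 - t)⁻¹ * ∑' j, b j * (t / (1 - t) ^ 2) ^ j) := by
  set f : ℕ × ℕ → 𝕜 := fun q => b q.1 * t ^ q.1 * ((q.2 + 2 * q.1).choose (2 * q.1) * t ^ q.2)
  have hrow j := hasSum_mul_pow_mul_choose_mul_geometric (b j) t j ht
  have hrow_norm j := hasSum_mul_pow_mul_choose_mul_geometric (‖b j‖) ‖t‖ j (by simpa using ht)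
  have hnorm (q : ℕ × ℕ) : ‖f q‖ =
      ‖b q.1‖ * ‖t‖ ^ q.1 * ((q.2 + 2 * q.1).choose (2 * q.1) * ‖t‖ ^ q.2) := by
    simp [f, norm_mul, norm_pow]
  have hf : Summable f := by
    refine .of_norm ((summable_prod_of_nonneg fun _ => norm_nonneg _).2 ⟨fun j => ?_, ?_⟩)
    · simpa only [hnorm] using (hrow_norm j).summable
    · simpa only [hnorm, (hrow_norm _).tsum_eq] using hb.mul_left (1 - ‖t‖)⁻¹
  have hdiag := hf.hasSum.sum_antidiagonal
  rw [← (hf.hasSum.prod_fiberwise hrow).tsum_eq, tsum_mul_left] at hdiag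
  convert hdiag using 2 with n
  rw [Nat.sum_antidiagonal_eq_sum_range_succ_mk, mul_sum]
  refine sum_congr rfl fun j hj => ?_
  obtain ⟨k, rfl⟩ := Nat.exists_eq_add_of_le (Nat.lt_succ_iff.1 (mem_range.1 hj))
  simp only [f, Nat.add_sub_cancel_left, show k + 2 * j = j + k + j by ring, pow_add]
  ring

end RCLike

theorem hasSum_pow_mul_riceH (ξ p v : ℂ) {t : ℂ} (ht : ‖t‖ < 1)
    (hvt : 4 * ‖v‖ * (‖t‖ / (1 - ‖t‖) ^ 2) < 1) :
    HasSum (fun n => t ^ n * riceH n ξ p v)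
      ((1 - t)⁻¹ * hyp ξ (1 / 2) p (-4 * v * t * ((1 - t) ^ 2)⁻¹)) := by
  have hb : Summable fun j => ‖ordinaryHypergeometricCoefficient ξ (1 / 2) p j * (-4 * v) ^ j‖ *
      (‖t‖ / (1 - ‖t‖) ^ 2) ^ j := by
    refine (summable_norm_ordinaryHypergeometricCoefficient_mul_pow ξ (1 / 2) p (by positivity)
      hvt).congr fun j => ?_
    simp only [norm_mul, norm_pow, norm_neg, RCLike.norm_ofNat]
    ring
  have hz (j : ℕ) : ordinaryHypergeometricCoefficient ξ (1 / 2) p j * (-4 * v) ^ j *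
      (t / (1 - t) ^ 2) ^ j =
      ordinaryHypergeometricCoefficient ξ (1 / 2) p j * (-4 * v * t * ((1 - t) ^ 2)⁻¹) ^ j := by
    rw [mul_assoc, ← mul_pow]
    ring
  simpa only [riceH_eq_sum_choose_mul, hyp_eq_tsum_ordinaryHypergeometricCoefficient, hz]
    using hasSum_pow_mul_sum_choose_mul ht hb

theorem stmt_12_general (ξ p v : ℂ) :
    ∃ ε > (0 : ℝ), ∀ t : ℂ, ‖t‖ < ε →
      ∑' n : ℕ, t ^ n * riceH n ξ p v =
        (1 - t)⁻¹ * hyp ξ (1 / 2) p (-4 * v * t * ((1 - t) ^ 2)⁻¹) := by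
  have hsmall : ∀ᶠ t : ℂ in 𝓝 0, ‖t‖ < 1 ∧ 4 * ‖v‖ * (‖t‖ / (1 - ‖t‖) ^ 2) < 1 :=
    (continuous_norm.continuousAt.eventually_lt continuousAt_const (by simp)).and
      (ContinuousAt.eventually_lt (by fun_prop (disch := simp)) continuousAt_const (by simp))
  obtain ⟨ε, hε, hball⟩ := Metric.eventually_nhds_iff.1 hsmall
  refine ⟨ε, hε, fun t ht => ?_⟩
  obtain ⟨ht₁, hvt⟩ := hball (by simpa using ht)
  exact (hasSum_pow_mul_riceH ξ p v ht₁ hvt).tsum_eq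

theorem stmt_12 (ξ p v : ℂ) (hp : ∀ m : ℕ, p ≠ -(m : ℂ)) :
    ∃ ε > (0 : ℝ), ∀ t : ℂ, ‖t‖ < ε →
      ∑' n : ℕ, t ^ n * riceH n ξ p v =
        (1 - t)⁻¹ * hyp ξ (1 / 2) p (-4 * v * t * ((1 - t) ^ 2)⁻¹) :=
  stmt_12_general ξ p v
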